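/- arXiv:2510.23197 — 5 statements merged into one kernel-verified Lean document; each statement's English description precedes it below -/
import Mathlib

section
/- Let d ≥ 3 be an integer, σ > 0, and let α be a Borel probability measure on ℝ^d. Fix y ∈ ℝ^d with α({y}) = 0 and ∫ |x−y|^{2−d} α(dx) < ∞, and suppose 0 < h(y) < ∞. Let ν_y be the probability measure on ℝ^d defined by ν_y(A) := (1/h(y)) ∫_A G_{σ²}(x,y) α(dx). Then for all ε, δ, r > 0 such that α(B(y,r)) > ε, one has ν_y( supp(α) ∩ B(y,(1+δ)r) ) ≥ 1 − (1/ε)·(1+δ)^{2−d}. -/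
/-!
The kernel depends only on `ρ = ‖x - y‖` and decreases in `ρ`; substituting `t = k² s` in its
time integral (Brownian scaling) shows that its value at distance `k ρ` is at most `k ^ (2 - d)`
times its value at distance `ρ`, for `k ≥ 1`. Writing `C` for the value at distance `r`, the mass
`α (B(y, r)) > ε` (with `α {y} = 0`, where the kernel takes a junk value) gives `h(y) ≥ ε C`,
while the kernel integrates to at most `(1 + δ) ^ (2 - d) C` off `B(y, (1 + δ) r)`. Since
`supp α` is `α`-conull, this leaves `ν_y`-mass at least `1 - (1 + δ) ^ (2 - d) / ε` on the
ball intersected with the support.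
-/

open MeasureTheory Real

/-- The resolvent (Green) kernel of `d`-dimensional Brownian motion killed at an
independent exponential time with parameter `1/σ²`. -/
noncomputable def greenKernel (d : ℕ) (σ : ℝ) (x y : EuclideanSpace ℝ (Fin d)) : ℝ :=
  (1 / σ ^ 2) * ∫ t in Set.Ioi (0 : ℝ),
    Real.exp (-t / σ ^ 2) * (2 * Real.pi * t) ^ (-(d : ℝ) / 2) *
      Real.exp (-‖x - y‖ ^ 2 / (2 * t))

/-- The topological support of a measure: the set of points all of whose open
neighbourhoods have positive measure. -/
def measureSupport {E : Type*} [TopologicalSpace E] [MeasurableSpace E]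
    (α : Measure E) : Set E :=
  {x | ∀ U : Set E, IsOpen U → x ∈ U → 0 < α U}

open Set
open scoped Nat

lemma rpow_neg_mul_exp_neg_div_le {n : ℕ} {s a t : ℝ} (hs₀ : 0 ≤ s) (hs : s ≤ n)
    (ha : 0 < a) (ht : 0 < t) :
    t ^ (-s) * exp (-a / t) ≤ 1 + n ! / a ^ n := by
  have hfac : (0 : ℝ) ≤ n ! / a ^ n := by positivity
  rcases le_or_gt 1 t with h1 | h1
  · have hpow : t ^ (-s) ≤ 1 := rpow_le_one_of_one_le_of_nonpos h1 (by linarith)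
    have hexp : exp (-a / t) ≤ 1 :=
      exp_le_one_iff.mpr (by rw [neg_div]; exact neg_nonpos.mpr (by positivity))
    nlinarith [rpow_nonneg ht.le (-s), exp_nonneg (-a / t)]
  · have hpow : t ^ (-s) ≤ t⁻¹ ^ n := by
      rw [rpow_neg ht.le, ← inv_rpow ht.le, ← rpow_natCast]
      exact rpow_le_rpow_of_exponent_le ((one_le_inv₀ ht).mpr h1.le) hs
    have hx : (a / t) ^ n ≤ n ! * exp (a / t) := by
      have := pow_div_factorial_le_exp (a / t) (by positivity) n
      rwa [div_le_iff₀ (by positivity), mul_comm] at this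
    calc t ^ (-s) * exp (-a / t) ≤ t⁻¹ ^ n * exp (-a / t) := by gcongr
      _ = (a / t) ^ n * exp (-(a / t)) / a ^ n := by rw [inv_pow, div_pow, neg_div]; field_simp
      _ ≤ n ! / a ^ n := by
        rw [exp_neg, ← div_eq_mul_inv]
        gcongr
        rwa [div_le_iff₀ (exp_pos _)]
      _ ≤ 1 + n ! / a ^ n := by linarith

noncomputable def greenIntegrand (d : ℕ) (σ ρ t : ℝ) : ℝ :=
  exp (-t / σ ^ 2) * (2 * π * t) ^ (-(d : ℝ) / 2) * exp (-ρ ^ 2 / (2 * t))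

noncomputable def greenRadial (d : ℕ) (σ ρ : ℝ) : ℝ :=
  (1 / σ ^ 2) * ∫ t in Ioi (0 : ℝ), greenIntegrand d σ ρ t

lemma greenKernel_eq_greenRadial (d : ℕ) (σ : ℝ) (x y : EuclideanSpace ℝ (Fin d)) :
    greenKernel d σ x y = greenRadial d σ ‖x - y‖ := rfl

lemma greenIntegrand_nonneg (d : ℕ) (σ ρ : ℝ) {t : ℝ} (ht : 0 ≤ t) :
    0 ≤ greenIntegrand d σ ρ t := by
  unfold greenIntegrand; positivity

lemma greenRadial_nonneg (d : ℕ) (σ ρ : ℝ) : 0 ≤ greenRadial d σ ρ :=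
  mul_nonneg (by positivity)
    (setIntegral_nonneg measurableSet_Ioi fun _ ht => greenIntegrand_nonneg d σ ρ (le_of_lt ht))

lemma continuousOn_greenIntegrand (d : ℕ) (σ ρ : ℝ) :
    ContinuousOn (greenIntegrand d σ ρ) (Ioi 0) := by
  intro t ht
  have ht : 0 < t := ht
  unfold greenIntegrand
  refine ContinuousAt.continuousWithinAt ?_
  have : 2 * π * t ≠ 0 := by positivity
  fun_prop (disch := first | positivity | exact Or.inl this)

lemma greenIntegrand_le (d : ℕ) (σ : ℝ) {ρ t : ℝ} (hρ : ρ ≠ 0) (ht : 0 < t) :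
    greenIntegrand d σ ρ t ≤
      (2 * π) ^ (-(d : ℝ) / 2) * (1 + d ! / (ρ ^ 2 / 2) ^ d) * exp (-(σ ^ 2)⁻¹ * t) := by
  have hbound := rpow_neg_mul_exp_neg_div_le (n := d) (s := d / 2) (by positivity)
    (by linarith [(Nat.cast_nonneg d : (0 : ℝ) ≤ d)]) (by positivity : 0 < ρ ^ 2 / 2) ht
  calc greenIntegrand d σ ρ t
      = (2 * π) ^ (-(d : ℝ) / 2) * (t ^ (-(d / 2 : ℝ)) * exp (-(ρ ^ 2 / 2) / t)) *
          exp (-(σ ^ 2)⁻¹ * t) := by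
        unfold greenIntegrand
        rw [mul_rpow (by positivity) ht.le, neg_div (2 : ℝ) (d : ℝ)]
        field_simp
    _ ≤ _ := by gcongr

lemma integrableOn_greenIntegrand (d : ℕ) {σ ρ : ℝ} (hσ : σ ≠ 0) (hρ : ρ ≠ 0) :
    IntegrableOn (greenIntegrand d σ ρ) (Ioi 0) := by
  refine Integrable.mono'
    ((exp_neg_integrableOn_Ioi 0 (by positivity : 0 < (σ ^ 2)⁻¹)).const_mul
      ((2 * π) ^ (-(d : ℝ) / 2) * (1 + d ! / (ρ ^ 2 / 2) ^ d)))
    ((continuousOn_greenIntegrand d σ ρ).aestronglyMeasurable measurableSet_Ioi) ?_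
  filter_upwards [self_mem_ae_restrict measurableSet_Ioi] with t (ht : 0 < t)
  rw [norm_of_nonneg (greenIntegrand_nonneg d σ ρ ht.le)]
  exact greenIntegrand_le d σ hρ ht

lemma greenIntegrand_sq_mul_le (d : ℕ) (σ : ℝ) {k ρ₁ ρ₂ t : ℝ} (hk : 1 ≤ k) (hρ₁ : 0 ≤ ρ₁)
    (hρ : k * ρ₁ ≤ ρ₂) (ht : 0 < t) :
    greenIntegrand d σ ρ₂ (k ^ 2 * t) ≤ k ^ (-(d : ℝ)) * greenIntegrand d σ ρ₁ t := by
  have hk₀ : 0 < k := by linarith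
  have htime : exp (-(k ^ 2 * t) / σ ^ 2) ≤ exp (-t / σ ^ 2) := by
    gcongr
    exact le_mul_of_one_le_left ht.le (one_le_pow₀ hk)
  have hspace : exp (-ρ₂ ^ 2 / (2 * (k ^ 2 * t))) ≤ exp (-ρ₁ ^ 2 / (2 * t)) := by
    rw [show -ρ₂ ^ 2 / (2 * (k ^ 2 * t)) = -(ρ₂ / k) ^ 2 / (2 * t) by field_simp]
    gcongr
    rwa [le_div_iff₀ hk₀, mul_comm]
  have hscale : (2 * π * (k ^ 2 * t)) ^ (-(d : ℝ) / 2)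
      = k ^ (-(d : ℝ)) * (2 * π * t) ^ (-(d : ℝ) / 2) := by
    rw [show 2 * π * (k ^ 2 * t) = k ^ 2 * (2 * π * t) by ring,
      mul_rpow (by positivity) (by positivity), ← rpow_natCast, ← rpow_mul hk₀.le]
    congr 2
    push_cast
    ring
  unfold greenIntegrand
  rw [hscale]
  calc _ ≤ exp (-t / σ ^ 2) * (k ^ (-(d : ℝ)) * (2 * π * t) ^ (-(d : ℝ) / 2)) *
        exp (-ρ₁ ^ 2 / (2 * t)) := by gcongr
    _ = _ := by ring

lemma greenRadial_le_rpow_mul (d : ℕ) {σ k ρ₁ ρ₂ : ℝ} (hσ : σ ≠ 0) (hk : 1 ≤ k) (hρ₁ : 0 < ρ₁)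
    (hρ : k * ρ₁ ≤ ρ₂) :
    greenRadial d σ ρ₂ ≤ k ^ ((2 : ℝ) - d) * greenRadial d σ ρ₁ := by
  have hk₀ : 0 < k := by linarith
  have hsubst : ∫ t in Ioi (0 : ℝ), greenIntegrand d σ ρ₂ t
      = k ^ 2 * ∫ s in Ioi (0 : ℝ), greenIntegrand d σ ρ₂ (k ^ 2 * s) := by
    rw [← smul_eq_mul, integral_comp_mul_left_Ioi' _ _ (by positivity), mul_zero]
  have hmono : ∫ s in Ioi (0 : ℝ), greenIntegrand d σ ρ₂ (k ^ 2 * s)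
      ≤ k ^ (-(d : ℝ)) * ∫ s in Ioi (0 : ℝ), greenIntegrand d σ ρ₁ s := by
    rw [← integral_const_mul]
    refine integral_mono_of_nonneg ?_ ((integrableOn_greenIntegrand d hσ hρ₁.ne').const_mul _) ?_
    · filter_upwards [self_mem_ae_restrict measurableSet_Ioi] with s (hs : 0 < s)
      exact greenIntegrand_nonneg d σ ρ₂ (by positivity)
    · filter_upwards [self_mem_ae_restrict measurableSet_Ioi] with s (hs : 0 < s)
      exact greenIntegrand_sq_mul_le d σ hk hρ₁.le hρ hs
  have hexp : k ^ ((2 : ℝ) - d) = k ^ 2 * k ^ (-(d : ℝ)) := by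
    rw [sub_eq_add_neg, rpow_add hk₀, rpow_two]
  unfold greenRadial
  rw [hsubst, hexp]
  calc _ ≤ 1 / σ ^ 2 *
        (k ^ 2 * (k ^ (-(d : ℝ)) * ∫ s in Ioi (0 : ℝ), greenIntegrand d σ ρ₁ s)) := by gcongr
    _ = _ := by ring

lemma greenRadial_antitoneOn (d : ℕ) {σ : ℝ} (hσ : σ ≠ 0) :
    AntitoneOn (greenRadial d σ) (Ioi 0) := fun ρ₁ hρ₁ ρ₂ _ hρ => by
  simpa using greenRadial_le_rpow_mul d hσ le_rfl hρ₁ (by simpa using hρ)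

lemma measureSupport_eq_support {E : Type*} [TopologicalSpace E] [MeasurableSpace E]
    (α : Measure E) : measureSupport α = α.support := by
  rw [Measure.support_eq_forall_isOpen]
  exact Set.ext fun _ => forall_congr' fun _ => forall_comm

open Metric

section
variable {d : ℕ} {σ : ℝ} {α : Measure (EuclideanSpace ℝ (Fin d))} {y : EuclideanSpace ℝ (Fin d)}

lemma mul_greenRadial_le_integral [IsFiniteMeasure α] (hσ : σ ≠ 0) (hy : α {y} = 0)
    (hG : Integrable (fun x => greenKernel d σ x y) α) {r : ℝ} (hr : 0 < r) :
    α.real (closedBall y r) * greenRadial d σ r ≤ ∫ x, greenKernel d σ x y ∂α := by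
  have hle : ∀ x ∈ closedBall y r \ {y}, greenRadial d σ r ≤ greenKernel d σ x y := by
    rintro x ⟨hxr, hxy⟩
    rw [greenKernel_eq_greenRadial]
    exact greenRadial_antitoneOn d hσ (norm_pos_iff.2 (sub_ne_zero.2 hxy)) hr
      (by rwa [mem_closedBall, dist_eq_norm] at hxr)
  calc α.real (closedBall y r) * greenRadial d σ r
      = greenRadial d σ r * α.real (closedBall y r \ {y}) := by
        rw [measureReal_def, measureReal_def, measure_sdiff_null hy, mul_comm]
    _ ≤ ∫ x in closedBall y r \ {y}, greenKernel d σ x y ∂α :=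
        setIntegral_ge_of_const_le_real (measurableSet_closedBall.diff (measurableSet_singleton y))
          (measure_ne_top α _) hle hG.integrableOn
    _ ≤ ∫ x, greenKernel d σ x y ∂α :=
        setIntegral_le_integral hG (ae_of_all _ fun x => greenRadial_nonneg d σ _)

lemma setIntegral_compl_closedBall_le [IsProbabilityMeasure α] (hσ : σ ≠ 0)
    (hG : Integrable (fun x => greenKernel d σ x y) α) {k r : ℝ} (hk : 1 ≤ k) (hr : 0 < r) :
    ∫ x in (closedBall y (k * r))ᶜ, greenKernel d σ x y ∂α
      ≤ k ^ ((2 : ℝ) - d) * greenRadial d σ r := by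
  have hle : ∀ x ∈ (closedBall y (k * r))ᶜ,
      greenKernel d σ x y ≤ k ^ ((2 : ℝ) - d) * greenRadial d σ r := by
    intro x hx
    rw [mem_compl_iff, mem_closedBall, not_le, dist_eq_norm] at hx
    rw [greenKernel_eq_greenRadial]
    exact greenRadial_le_rpow_mul d hσ hk hr hx.le
  have hC : 0 ≤ k ^ ((2 : ℝ) - d) * greenRadial d σ r :=
    mul_nonneg (rpow_nonneg (by linarith) _) (greenRadial_nonneg d σ r)
  calc ∫ x in (closedBall y (k * r))ᶜ, greenKernel d σ x y ∂α
      ≤ ∫ _ in (closedBall y (k * r))ᶜ, k ^ ((2 : ℝ) - d) * greenRadial d σ r ∂α :=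
        setIntegral_mono_on hG.integrableOn (integrableOn_const (measure_ne_top α _))
          measurableSet_closedBall.compl hle
    _ = α.real (closedBall y (k * r))ᶜ * (k ^ ((2 : ℝ) - d) * greenRadial d σ r) := by
        rw [setIntegral_const, smul_eq_mul]
    _ ≤ k ^ ((2 : ℝ) - d) * greenRadial d σ r :=
        mul_le_of_le_one_left hC measureReal_le_one

end

theorem stmt0_general (d : ℕ) (σ : ℝ) (hσ : 0 < σ)
    (α : Measure (EuclideanSpace ℝ (Fin d))) [IsProbabilityMeasure α]
    (y : EuclideanSpace ℝ (Fin d)) (hy : α {y} = 0)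
    (hG : Integrable (fun x => greenKernel d σ x y) α)
    (hpos : 0 < ∫ x, greenKernel d σ x y ∂α)
    (ν : Measure (EuclideanSpace ℝ (Fin d)))
    (hν : ∀ A : Set (EuclideanSpace ℝ (Fin d)), MeasurableSet A →
      ν A = ENNReal.ofReal ((∫ x in A, greenKernel d σ x y ∂α) / ∫ x, greenKernel d σ x y ∂α))
    (ε δ r : ℝ) (hε : 0 < ε) (hδ : 0 < δ) (hr : 0 < r)
    (hmass : ENNReal.ofReal ε < α (Metric.closedBall y r)) :
    ENNReal.ofReal (1 - (1 / ε) * (1 + δ) ^ ((2 : ℝ) - d)) ≤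
      ν (measureSupport α ∩ Metric.closedBall y ((1 + δ) * r)) := by
  set Z := ∫ x, greenKernel d σ x y ∂α
  set B := closedBall y ((1 + δ) * r)
  set K := (1 + δ) ^ ((2 : ℝ) - d)
  have hεB : ε < α.real (closedBall y r) :=
    (ENNReal.ofReal_lt_iff_lt_toReal hε.le (measure_ne_top α _)).1 hmass
  have hlow : ε * greenRadial d σ r ≤ Z :=
    (mul_le_mul_of_nonneg_right hεB.le (greenRadial_nonneg d σ r)).trans
      (mul_greenRadial_le_integral hσ.ne' hy hG hr)
  have hout : ∫ x in Bᶜ, greenKernel d σ x y ∂α ≤ 1 / ε * K * Z :=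
    calc ∫ x in Bᶜ, greenKernel d σ x y ∂α ≤ K * greenRadial d σ r :=
          setIntegral_compl_closedBall_le hσ.ne' hG (by linarith) hr
      _ ≤ K * (Z / ε) := by gcongr; rwa [le_div_iff₀ hε, mul_comm]
      _ = 1 / ε * K * Z := by ring
  have hsupp : ∫ x in measureSupport α ∩ B, greenKernel d σ x y ∂α
      = ∫ x in B, greenKernel d σ x y ∂α := by
    rw [measureSupport_eq_support]
    exact setIntegral_congr_set
      (inter_ae_eq_right_of_ae_eq_univ (ae_eq_univ.2 α.measure_compl_support))
  rw [hν _ ((measureSupport_eq_support α ▸ Measure.isClosed_support.measurableSet).inter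
    measurableSet_closedBall), hsupp]
  refine ENNReal.ofReal_le_ofReal ((le_div_iff₀ hpos).2 ?_)
  linarith [integral_add_compl (measurableSet_closedBall : MeasurableSet B) hG]

/-- Theorem 3.1 (asymptotic concentration near the projection I). -/
theorem stmt0 (d : ℕ) (hd : 3 ≤ d) (σ : ℝ) (hσ : 0 < σ)
    (α : Measure (EuclideanSpace ℝ (Fin d))) [IsProbabilityMeasure α]
    (y : EuclideanSpace ℝ (Fin d)) (hy : α {y} = 0)
    (hw : Integrable (fun x => ‖x - y‖ ^ ((2 : ℝ) - d)) α)
    (hG : Integrable (fun x => greenKernel d σ x y) α)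
    (hpos : 0 < ∫ x, greenKernel d σ x y ∂α)
    (ν : Measure (EuclideanSpace ℝ (Fin d)))
    (hν : ∀ A : Set (EuclideanSpace ℝ (Fin d)), MeasurableSet A →
      ν A = ENNReal.ofReal ((∫ x in A, greenKernel d σ x y ∂α) / ∫ x, greenKernel d σ x y ∂α))
    (ε δ r : ℝ) (hε : 0 < ε) (hδ : 0 < δ) (hr : 0 < r)
    (hmass : ENNReal.ofReal ε < α (Metric.closedBall y r)) :
    ENNReal.ofReal (1 - (1 / ε) * (1 + δ) ^ ((2 : ℝ) - d)) ≤
      ν (measureSupport α ∩ Metric.closedBall y ((1 + δ) * r)) :=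
  stmt0_general d σ hσ α y hy hG hpos ν hν ε δ r hε hδ hr hmass
end

section
/- Let d ≥ 3 be an integer, σ > 0, and let α be a Borel probability measure on ℝ^d. Fix y ∈ ℝ^d with α({y}) = 0 and 0 < ∫ |x−y|^{2−d} α(dx) < ∞. Then for every R > 0, (∫_{B(y,R)} G_{σ²}(x,y) α(dx)) / (∫_{ℝ^d} G_{σ²}(x,y) α(dx)) ≥ (∫_{B(y,R)} |x−y|^{2−d} α(dx)) / (∫_{ℝ^d} |x−y|^{2−d} α(dx)). -/
/-!
Substituting `t = r² s` with `r = |x - y|` factors the kernel as `G(x, y) = r^(2-d) φ(r)`, where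
`φ(r) = σ⁻² ∫₀^∞ e^(-r² s / σ²) p_s(1) ds` and `p_s(1)` is the heat kernel at unit distance; for
`d ≥ 3` the integral converges at `r = 0` (a Gamma integral after `s ↦ 1/s`). Since `φ` is
positive and nonincreasing, `G ≥ φ(R) |x - y|^(2-d)` on the ball and `G ≤ φ(R) |x - y|^(2-d)` off
it, and comparing the two splittings of the total masses gives the inequality of the ratios.
-/

open MeasureTheory Real

open Set

theorem div_add_le_div_add_of_mul_le {a b a' b' c : ℝ} (hc : 0 < c) (ha : 0 ≤ a) (hb : 0 ≤ b)
    (hb' : 0 ≤ b') (haa' : c * a ≤ a') (hbb' : b' ≤ c * b) :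
    a / (a + b) ≤ a' / (a' + b') := by
  have ha' : 0 ≤ a' := (mul_nonneg hc.le ha).trans haa'
  rcases (add_nonneg ha hb).eq_or_lt with hab | hab
  · rw [← hab, div_zero]
    positivity
  rcases (add_nonneg ha' hb').eq_or_lt with hab' | hab'
  · have ha0 : a = 0 := by nlinarith
    rw [ha0, zero_div]
    positivity
  rw [div_le_div_iff₀ hab hab']
  nlinarith [mul_le_mul_of_nonneg_left hbb' ha, mul_le_mul_of_nonneg_right haa' hb]

section RatioComparison

variable {X : Type*} [MeasurableSpace X] {μ : Measure X} {w g : X → ℝ} {s : Set X} {c : ℝ}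

theorem setIntegral_div_integral_le_of_mul_le (hs : MeasurableSet s) (hc : 0 < c)
    (hw : Integrable w μ) (hg : Integrable g μ) (hw0 : 0 ≤ᵐ[μ] w) (hg0 : 0 ≤ᵐ[μ] g)
    (hin : ∀ᵐ x ∂μ.restrict s, c * w x ≤ g x) (hout : ∀ᵐ x ∂μ.restrict sᶜ, g x ≤ c * w x) :
    (∫ x in s, w x ∂μ) / ∫ x, w x ∂μ ≤ (∫ x in s, g x ∂μ) / ∫ x, g x ∂μ := by
  rw [← integral_add_compl hs hw, ← integral_add_compl hs hg]
  refine div_add_le_div_add_of_mul_le hc (setIntegral_nonneg_of_ae hw0)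
    (setIntegral_nonneg_of_ae hw0) (setIntegral_nonneg_of_ae hg0) ?_ ?_
  · rw [← integral_const_mul]
    exact integral_mono_ae (hw.const_mul c).integrableOn hg.integrableOn hin
  · rw [← integral_const_mul]
    exact integral_mono_ae hg.integrableOn (hw.const_mul c).integrableOn hout

end RatioComparison

noncomputable def unitHeatKernel (d : ℕ) (s : ℝ) : ℝ :=
  (2 * π * s) ^ (-(d : ℝ) / 2) * exp (-1 / (2 * s))

theorem unitHeatKernel_pos (d : ℕ) {s : ℝ} (hs : 0 < s) : 0 < unitHeatKernel d s := by
  unfold unitHeatKernel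
  positivity

theorem integrableOn_unitHeatKernel {d : ℕ} (hd : 3 ≤ d) :
    IntegrableOn (unitHeatKernel d) (Ioi 0) := by
  have hd' : (3 : ℝ) ≤ d := by exact_mod_cast hd
  -- after `s = u⁻¹` this is a Gamma integrand `u ^ (d/2 - 2) * exp (-u/2)`
  have hGamma := (integrableOn_rpow_mul_exp_neg_mul_rpow (s := (d : ℝ) / 2 - 2)
    (by linarith) one_pos (one_half_pos (α := ℝ))).const_mul ((2 * π) ^ (-(d : ℝ) / 2))
  rw [← integrableOn_Ioi_comp_rpow_iff _ (neg_ne_zero.mpr one_ne_zero)]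
  refine IntegrableOn.congr_fun hGamma (fun u (hu : 0 < u) => ?_) measurableSet_Ioi
  simp only [unitHeatKernel, smul_eq_mul, rpow_one, rpow_neg_one, abs_neg, abs_one, one_mul]
  rw [Real.mul_rpow (by positivity) (inv_nonneg.2 hu.le), Real.inv_rpow hu.le,
    ← Real.rpow_neg hu.le, show -1 / (2 * u⁻¹) = -(1 / 2) * u by field_simp,
    show (d : ℝ) / 2 - 2 = -1 - 1 + -(-(d : ℝ) / 2) by ring, rpow_add hu]
  ring

noncomputable def greenProfile (d : ℕ) (σ r : ℝ) : ℝ :=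
  (1 / σ ^ 2) * ∫ s in Ioi 0, exp (-(r ^ 2 * s) / σ ^ 2) * unitHeatKernel d s

theorem integrableOn_greenProfile_integrand {d : ℕ} (hd : 3 ≤ d) (σ r : ℝ) :
    IntegrableOn (fun s => exp (-(r ^ 2 * s) / σ ^ 2) * unitHeatKernel d s) (Ioi 0) := by
  refine (integrableOn_unitHeatKernel hd).mono' (by unfold unitHeatKernel; fun_prop) ?_
  filter_upwards [ae_restrict_mem measurableSet_Ioi] with s (hs : 0 < s)
  have hexp : exp (-(r ^ 2 * s) / σ ^ 2) ≤ 1 :=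
    exp_le_one_iff.mpr (div_nonpos_of_nonpos_of_nonneg (by nlinarith [sq_nonneg r]) (sq_nonneg σ))
  rw [norm_mul, Real.norm_of_nonneg (exp_nonneg _),
    Real.norm_of_nonneg (unitHeatKernel_pos d hs).le]
  exact mul_le_of_le_one_left (unitHeatKernel_pos d hs).le hexp

theorem greenProfile_antitoneOn {d : ℕ} (hd : 3 ≤ d) (σ : ℝ) :
    AntitoneOn (greenProfile d σ) (Ici 0) := by
  intro r (hr : 0 ≤ r) R _ hrR
  refine mul_le_mul_of_nonneg_left (setIntegral_mono_on (integrableOn_greenProfile_integrand hd σ R)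
    (integrableOn_greenProfile_integrand hd σ r) measurableSet_Ioi fun s (hs : 0 < s) => ?_)
    (by positivity)
  refine mul_le_mul_of_nonneg_right (exp_le_exp.mpr ?_) (unitHeatKernel_pos d hs).le
  exact div_le_div_of_nonneg_right
    (neg_le_neg (mul_le_mul_of_nonneg_right (pow_le_pow_left₀ hr hrR 2) hs.le)) (sq_nonneg σ)

theorem greenProfile_pos {d : ℕ} (hd : 3 ≤ d) {σ : ℝ} (hσ : σ ≠ 0) (r : ℝ) :
    0 < greenProfile d σ r := by
  have hpos : ∀ s ∈ Ioi (0 : ℝ), 0 < exp (-(r ^ 2 * s) / σ ^ 2) * unitHeatKernel d s :=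
    fun s hs => mul_pos (exp_pos _) (unitHeatKernel_pos d hs)
  refine mul_pos (by positivity) ?_
  rw [setIntegral_pos_iff_support_of_nonneg_ae
    ((ae_restrict_mem measurableSet_Ioi).mono fun s hs => (hpos s hs).le)
    (integrableOn_greenProfile_integrand hd σ r),
    inter_eq_right.mpr fun s hs => Function.mem_support.mpr (hpos s hs).ne', volume_Ioi]
  exact ENNReal.zero_lt_top

theorem greenKernel_eq_rpow_mul_greenProfile (d : ℕ) (σ : ℝ) {x y : EuclideanSpace ℝ (Fin d)}
    (hxy : x ≠ y) :
    greenKernel d σ x y = ‖x - y‖ ^ ((2 : ℝ) - d) * greenProfile d σ ‖x - y‖ := by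
  have hr : 0 < ‖x - y‖ := norm_pos_iff.mpr (sub_ne_zero.mpr hxy)
  set r := ‖x - y‖
  set f : ℝ → ℝ := fun t => exp (-t / σ ^ 2) * (2 * π * t) ^ (-(d : ℝ) / 2) *
    exp (-r ^ 2 / (2 * t))
  have hscale : ∀ s ∈ Ioi (0 : ℝ),
      f (r ^ 2 * s) = r ^ (-(d : ℝ)) * (exp (-(r ^ 2 * s) / σ ^ 2) * unitHeatKernel d s) := by
    intro s (hs : 0 < s)
    have hpow : (r ^ 2) ^ (-(d : ℝ) / 2) = r ^ (-(d : ℝ)) := by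
      rw [← rpow_natCast, ← rpow_mul hr.le]
      congr 1
      push_cast
      ring
    simp only [f, unitHeatKernel]
    rw [show 2 * π * (r ^ 2 * s) = r ^ 2 * (2 * π * s) by ring,
      mul_rpow (by positivity) (by positivity), hpow,
      show -r ^ 2 / (2 * (r ^ 2 * s)) = -1 / (2 * s) by field_simp]
    ring
  have hsubst := integral_comp_mul_left_Ioi f 0 (pow_pos hr 2)
  rw [mul_zero, smul_eq_mul, setIntegral_congr_fun measurableSet_Ioi hscale,
    integral_const_mul] at hsubst
  calc greenKernel d σ x y = (1 / σ ^ 2) * ∫ t in Ioi 0, f t := rfl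
    _ = (1 / σ ^ 2) * (r ^ 2 * r ^ (-(d : ℝ)) *
          ∫ s in Ioi 0, exp (-(r ^ 2 * s) / σ ^ 2) * unitHeatKernel d s) := by
      rw [mul_assoc (r ^ 2), hsubst, mul_inv_cancel_left₀ (pow_pos hr 2).ne']
    _ = r ^ ((2 : ℝ) - d) * greenProfile d σ r := by
      rw [sub_eq_add_neg, rpow_add hr, rpow_two, greenProfile]
      ring

theorem greenKernel_nonneg (d : ℕ) (σ : ℝ) (x y : EuclideanSpace ℝ (Fin d)) :
    0 ≤ greenKernel d σ x y :=
  mul_nonneg (by positivity) (setIntegral_nonneg measurableSet_Ioi fun t (ht : 0 < t) => by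
    positivity)

theorem measurable_greenKernel (d : ℕ) (σ : ℝ) (y : EuclideanSpace ℝ (Fin d)) :
    Measurable fun x => greenKernel d σ x y := by
  have hint : StronglyMeasurable fun p : EuclideanSpace ℝ (Fin d) × ℝ =>
      exp (-p.2 / σ ^ 2) * (2 * π * p.2) ^ (-(d : ℝ) / 2) * exp (-‖p.1 - y‖ ^ 2 / (2 * p.2)) :=
    Measurable.stronglyMeasurable (by fun_prop)
  exact hint.integral_prod_right'.measurable.const_mul _

theorem integrable_greenKernel {d : ℕ} (hd : 3 ≤ d) (σ : ℝ)
    {α : Measure (EuclideanSpace ℝ (Fin d))} {y : EuclideanSpace ℝ (Fin d)} (hy : α {y} = 0)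
    (hw : Integrable (fun x => ‖x - y‖ ^ ((2 : ℝ) - d)) α) :
    Integrable (fun x => greenKernel d σ x y) α := by
  refine (hw.mul_const (greenProfile d σ 0)).mono'
    (measurable_greenKernel d σ y).aestronglyMeasurable ?_
  filter_upwards [measure_eq_zero_iff_ae_notMem.mp hy] with x (hx : x ≠ y)
  rw [Real.norm_of_nonneg (greenKernel_nonneg d σ x y), greenKernel_eq_rpow_mul_greenProfile d σ hx]
  exact mul_le_mul_of_nonneg_left
    (greenProfile_antitoneOn hd σ self_mem_Ici (norm_nonneg _) (norm_nonneg _)) (by positivity)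

theorem stmt1_general (d : ℕ) (hd : 3 ≤ d) (σ : ℝ) (hσ : 0 < σ)
    (α : Measure (EuclideanSpace ℝ (Fin d)))
    (y : EuclideanSpace ℝ (Fin d)) (hy : α {y} = 0)
    (hw : Integrable (fun x => ‖x - y‖ ^ ((2 : ℝ) - d)) α)
    (R : ℝ) (hR : 0 < R) :
    (∫ x in Metric.closedBall y R, ‖x - y‖ ^ ((2 : ℝ) - d) ∂α) /
        (∫ x, ‖x - y‖ ^ ((2 : ℝ) - d) ∂α) ≤
      (∫ x in Metric.closedBall y R, greenKernel d σ x y ∂α) /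
        (∫ x, greenKernel d σ x y ∂α) := by
  have hprofile : ∀ᵐ x ∂α,
      greenKernel d σ x y = ‖x - y‖ ^ ((2 : ℝ) - d) * greenProfile d σ ‖x - y‖ :=
    (measure_eq_zero_iff_ae_notMem.mp hy).mono fun x hx =>
      greenKernel_eq_rpow_mul_greenProfile d σ hx
  have hR₀ : R ∈ Ici (0 : ℝ) := hR.le
  refine setIntegral_div_integral_le_of_mul_le Metric.isClosed_closedBall.measurableSet
    (greenProfile_pos hd hσ.ne' R) hw (integrable_greenKernel hd σ hy hw)
    (ae_of_all _ fun x => by positivity) (ae_of_all _ fun x => greenKernel_nonneg d σ x y) ?_ ?_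
  · filter_upwards [ae_restrict_mem Metric.isClosed_closedBall.measurableSet,
      ae_restrict_of_ae hprofile] with x hx hG
    rw [hG, mul_comm (greenProfile d σ R)]
    exact mul_le_mul_of_nonneg_left (greenProfile_antitoneOn hd σ (norm_nonneg _) hR₀
      (mem_closedBall_iff_norm.mp hx)) (rpow_nonneg (norm_nonneg _) _)
  · filter_upwards [ae_restrict_mem Metric.isClosed_closedBall.measurableSet.compl,
      ae_restrict_of_ae hprofile] with x hx hG
    rw [hG, mul_comm (greenProfile d σ R)]
    exact mul_le_mul_of_nonneg_left (greenProfile_antitoneOn hd σ hR₀ (norm_nonneg _)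
      (not_le.mp (mt mem_closedBall_iff_norm.mpr hx)).le) (rpow_nonneg (norm_nonneg _) _)

/-- Lemma 3.3 (monotone domination of the resolvent kernel). -/
theorem stmt1 (d : ℕ) (hd : 3 ≤ d) (σ : ℝ) (hσ : 0 < σ)
    (α : Measure (EuclideanSpace ℝ (Fin d))) [IsProbabilityMeasure α]
    (y : EuclideanSpace ℝ (Fin d)) (hy : α {y} = 0)
    (hw : Integrable (fun x => ‖x - y‖ ^ ((2 : ℝ) - d)) α)
    (hwpos : 0 < ∫ x, ‖x - y‖ ^ ((2 : ℝ) - d) ∂α)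
    (R : ℝ) (hR : 0 < R) :
    (∫ x in Metric.closedBall y R, ‖x - y‖ ^ ((2 : ℝ) - d) ∂α) /
        (∫ x, ‖x - y‖ ^ ((2 : ℝ) - d) ∂α) ≤
      (∫ x in Metric.closedBall y R, greenKernel d σ x y ∂α) /
        (∫ x, greenKernel d σ x y ∂α) :=
  stmt1_general d hd σ hσ α y hy hw R hR
end

section
/- Let (E, 𝔈) be a measurable space with a measure α, let w : E → [0,∞] and g : E → [0,∞] be measurable, and let B ∈ 𝔈. Assume there is a constant c ≥ 0 such that g(x) ≥ c for all x ∈ B and g(x) ≤ c for all x ∉ B, and assume 0 < ∫ w·g dα < ∞ and 0 < ∫ w dα < ∞. Then (∫_B w·g dα) / (∫_E w·g dα) ≥ (∫_B w dα) / (∫_E w dα). -/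
open MeasureTheory

open scoped ENNReal

/-- Core comparison step in the proof of Lemma 3.3: if a nonnegative weight `g` dominates a
threshold `c` on `B` and is dominated by `c` outside `B`, then reweighting `w` by `g` can only
increase the relative mass of `B`. -/
theorem stmt2 {E : Type*} [MeasurableSpace E] (α : Measure E)
    (w g : E → ℝ≥0∞) (hw : Measurable w) (hg : Measurable g)
    (B : Set E) (hB : MeasurableSet B)
    (c : ℝ≥0∞) (hc : 0 ≤ c)
    (hgB : ∀ x ∈ B, c ≤ g x) (hgBc : ∀ x ∉ B, g x ≤ c)
    (hwg_pos : 0 < ∫⁻ x, w x * g x ∂α) (hwg_fin : ∫⁻ x, w x * g x ∂α < ⊤)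
    (hw_pos : 0 < ∫⁻ x, w x ∂α) (hw_fin : ∫⁻ x, w x ∂α < ⊤) :
    (∫⁻ x in B, w x ∂α) / (∫⁻ x, w x ∂α) ≤
      (∫⁻ x in B, w x * g x ∂α) / (∫⁻ x, w x * g x ∂α) := by
  set A := ∫⁻ x in B, w x ∂α with hA
  set W := ∫⁻ x, w x ∂α with hW
  set A' := ∫⁻ x in B, w x * g x ∂α with hA'
  set W' := ∫⁻ x, w x * g x ∂α with hW'
  -- key: A * W' ≤ A' * W
  have hsplitW : W = A + ∫⁻ x in Bᶜ, w x ∂α := by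
    rw [hW, hA, ← lintegral_add_compl (μ := α) (f := fun x => w x) hB]
  have hsplitW' : W' = A' + ∫⁻ x in Bᶜ, w x * g x ∂α := by
    rw [hW', hA', ← lintegral_add_compl (μ := α) (f := fun x => w x * g x) hB]
  have h1 : ∫⁻ x in Bᶜ, w x * g x ∂α ≤ c * ∫⁻ x in Bᶜ, w x ∂α := by
    rw [← lintegral_const_mul c hw]
    refine setLIntegral_mono (by fun_prop) fun x hx => ?_
    rw [mul_comm]
    exact mul_le_mul_left (hgBc x hx) _
  have h2 : c * A ≤ A' := by
    rw [← lintegral_const_mul c hw]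
    refine setLIntegral_mono (by fun_prop) fun x hx => ?_
    rw [mul_comm (w x)]
    exact mul_le_mul_left (hgB x hx) _
  have key : A * W' ≤ A' * W := by
    rw [hsplitW, hsplitW', mul_add, mul_add, mul_comm A A']
    refine add_le_add le_rfl ?_
    calc A * ∫⁻ x in Bᶜ, w x * g x ∂α ≤ A * (c * ∫⁻ x in Bᶜ, w x ∂α) := by gcongr
      _ = (c * A) * ∫⁻ x in Bᶜ, w x ∂α := by ring
      _ ≤ A' * ∫⁻ x in Bᶜ, w x ∂α := by gcongr
  rw [ENNReal.le_div_iff_mul_le (Or.inl hwg_pos.ne') (Or.inl hwg_fin.ne),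
    div_eq_mul_inv, mul_right_comm, ← div_eq_mul_inv,
    ENNReal.div_le_iff_le_mul (Or.inl hw_pos.ne') (Or.inl hw_fin.ne)]
  exact key
end

section
/- Let d ≥ 3 be an integer and σ > 0. Then the function f : (0,∞) → (0,∞) defined by f(ρ) := ρ^{d−2} · (1/σ²) ∫₀^∞ e^{−t/σ²} (2πt)^{−d/2} e^{−ρ²/(2t)} dt is strictly decreasing on (0,∞). -/
/-!
Substituting `t = ρ² u` in the resolvent integral absorbs the factor `ρ^{d-2}` completely:
`ρ^{d-2} G(ρ) = σ⁻² ∫₀^∞ e^{-(ρ²/σ²) u} (2πu)^{-d/2} e^{-1/(2u)} du`.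
The integrand on the right is strictly decreasing in `ρ` for every `u > 0`, and it is integrable
because `(2πu)^{-d/2} e^{-1/(2u)}` is bounded, so the integral is strictly decreasing in `ρ`.
-/

open MeasureTheory Real Set Nat

theorem integral_lt_integral_of_ae_lt {α : Type*} [MeasurableSpace α] {μ : Measure α}
    [NeZero μ] {f g : α → ℝ} (hf : Integrable f μ) (hg : Integrable g μ)
    (hfg : ∀ᵐ x ∂μ, f x < g x) : ∫ x, f x ∂μ < ∫ x, g x ∂μ := by
  have hsupp : ∀ᵐ x ∂μ, x ∈ Function.support fun x => g x - f x :=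
    hfg.mono fun x hx => sub_ne_zero.mpr hx.ne'
  have hpos : 0 < ∫ x, g x - f x ∂μ := by
    rw [integral_pos_iff_support_of_nonneg_ae (hfg.mono fun x hx => sub_nonneg.mpr hx.le)
      (hg.sub hf : Integrable (fun x => g x - f x) μ)]
    refine pos_iff_ne_zero.mpr fun hnull => ?_
    obtain ⟨x, hx, hx'⟩ := (hsupp.and (measure_eq_zero_iff_ae_notMem.mp hnull)).exists
    exact hx' hx
  rw [integral_sub hg hf] at hpos
  linarith

theorem rpow_mul_exp_neg_le {x s : ℝ} {n : ℕ} (hx : 0 ≤ x) (hs : 0 ≤ s) (hsn : s ≤ n) :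
    x ^ s * exp (-x) ≤ 1 + n ! := by
  have hpow : x ^ s ≤ 1 + x ^ n := by
    rcases le_total x 1 with h1 | h1
    · linarith [rpow_le_one hx h1 hs, pow_nonneg hx n]
    · have := rpow_le_rpow_of_exponent_le h1 hsn
      rw [rpow_natCast] at this
      linarith
  have hfact : x ^ n * exp (-x) ≤ n ! := by
    have := Real.pow_div_factorial_le_exp x hx n
    rw [exp_neg, ← div_eq_mul_inv, div_le_iff₀ (exp_pos x)]
    rwa [div_le_iff₀ (by positivity), mul_comm] at this
  calc x ^ s * exp (-x) ≤ (1 + x ^ n) * exp (-x) := by gcongr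
    _ = exp (-x) + x ^ n * exp (-x) := by ring
    _ ≤ 1 + n ! := by gcongr; exact exp_le_one_iff.mpr (neg_nonpos.mpr hx)

theorem rpow_mul_exp_neg_inv_le (d : ℕ) {u : ℝ} (hu : 0 < u) :
    (2 * π * u) ^ (-(d : ℝ) / 2) * exp (-1 / (2 * u)) ≤ π ^ (-(d : ℝ) / 2) * (1 + d !) := by
  have hsplit : (2 * π * u) ^ (-(d : ℝ) / 2) * exp (-1 / (2 * u)) =
      π ^ (-(d : ℝ) / 2) * ((2 * u)⁻¹ ^ ((d : ℝ) / 2) * exp (-(2 * u)⁻¹)) := by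
    rw [show 2 * π * u = π * (2 * u) by ring, mul_rpow pi_pos.le (by positivity), neg_div,
      rpow_neg (by positivity : (0 : ℝ) ≤ 2 * u), ← inv_rpow (by positivity), neg_div,
      one_div]
    ring
  rw [hsplit]
  gcongr
  exact rpow_mul_exp_neg_le (by positivity) (by positivity) (half_le_self (Nat.cast_nonneg d))

noncomputable def resolventIntegrand (d : ℕ) (c u : ℝ) : ℝ :=
  exp (-c * u) * (2 * π * u) ^ (-(d : ℝ) / 2) * exp (-1 / (2 * u))

/-- Up to a constant factor this is `z^ν K_ν(z)` with `z = √(2c)` and `ν = (d-2)/2`. -/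
noncomputable def resolventProfile (d : ℕ) (c : ℝ) : ℝ :=
  ∫ u in Ioi 0, resolventIntegrand d c u

theorem continuousOn_resolventIntegrand (d : ℕ) (c : ℝ) :
    ContinuousOn (resolventIntegrand d c) (Ioi 0) := by
  intro u hu
  have hu : 0 < u := hu
  apply ContinuousAt.continuousWithinAt
  have h₁ : ContinuousAt (fun u : ℝ => (2 * π * u) ^ (-(d : ℝ) / 2)) u :=
    (continuousAt_id.const_mul _).rpow_const (Or.inl (by positivity))
  have h₂ : ContinuousAt (fun u : ℝ => exp (-1 / (2 * u))) u :=
    (continuousAt_const.div (continuousAt_id.const_mul _) (by positivity)).rexp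
  exact ((continuous_const.mul continuous_id).rexp.continuousAt.mul h₁).mul h₂

theorem integrableOn_resolventIntegrand (d : ℕ) {c : ℝ} (hc : 0 < c) :
    IntegrableOn (resolventIntegrand d c) (Ioi 0) := by
  refine Integrable.mono'
    ((exp_neg_integrableOn_Ioi 0 hc).mul_const (π ^ (-(d : ℝ) / 2) * (1 + d !)))
    ((continuousOn_resolventIntegrand d c).aestronglyMeasurable measurableSet_Ioi) ?_
  filter_upwards [ae_restrict_mem measurableSet_Ioi] with u (hu : 0 < u)
  rw [resolventIntegrand, norm_of_nonneg (by positivity), mul_assoc]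
  exact mul_le_mul_of_nonneg_left (rpow_mul_exp_neg_inv_le d hu) (exp_pos _).le

theorem resolventIntegrand_lt {d : ℕ} {c c' u : ℝ} (hcc' : c < c') (hu : 0 < u) :
    resolventIntegrand d c' u < resolventIntegrand d c u := by
  unfold resolventIntegrand
  gcongr

theorem resolventProfile_strictAntiOn (d : ℕ) : StrictAntiOn (resolventProfile d) (Ioi 0) := by
  intro c (hc : 0 < c) c' (hc' : 0 < c') hcc'
  have : NeZero (volume.restrict (Ioi (0 : ℝ))) := ⟨by simp⟩
  exact integral_lt_integral_of_ae_lt (integrableOn_resolventIntegrand d hc')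
    (integrableOn_resolventIntegrand d hc)
    ((ae_restrict_mem measurableSet_Ioi).mono fun u hu => resolventIntegrand_lt hcc' hu)

theorem rpow_mul_integral_eq_resolventProfile (d : ℕ) (a : ℝ) {ρ : ℝ} (hρ : 0 < ρ) :
    ρ ^ ((d : ℝ) - 2) * ∫ t in Ioi (0 : ℝ),
        exp (-t / a) * (2 * π * t) ^ (-(d : ℝ) / 2) * exp (-ρ ^ 2 / (2 * t)) =
      resolventProfile d (ρ ^ 2 / a) := by
  set g : ℝ → ℝ := fun t =>
    exp (-t / a) * (2 * π * t) ^ (-(d : ℝ) / 2) * exp (-ρ ^ 2 / (2 * t))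
  have hρ2 : 0 < ρ ^ 2 := by positivity
  have hsubst : ∫ t in Ioi 0, g t = ρ ^ 2 * ∫ u in Ioi 0, g (ρ ^ 2 * u) := by
    rw [integral_comp_mul_left_Ioi g 0 hρ2, mul_zero, smul_eq_mul, mul_inv_cancel_left₀ hρ2.ne']
  have hpow : ρ ^ ((d : ℝ) - 2) * ρ ^ 2 * (ρ ^ 2) ^ (-(d : ℝ) / 2) = 1 := by
    rw [← rpow_natCast, ← rpow_mul hρ.le, ← rpow_add hρ, ← rpow_add hρ]
    convert rpow_zero ρ using 2
    push_cast
    ring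
  have hpointwise : ∀ u ∈ Ioi (0 : ℝ),
      ρ ^ ((d : ℝ) - 2) * ρ ^ 2 * g (ρ ^ 2 * u) = resolventIntegrand d (ρ ^ 2 / a) u := by
    intro u (hu : 0 < u)
    simp only [g, resolventIntegrand]
    rw [show 2 * π * (ρ ^ 2 * u) = ρ ^ 2 * (2 * π * u) by ring,
      mul_rpow hρ2.le (by positivity), show -ρ ^ 2 / (2 * (ρ ^ 2 * u)) = -1 / (2 * u) by
        field_simp, show -(ρ ^ 2 * u) / a = -(ρ ^ 2 / a) * u by ring]
    linear_combination (exp (-(ρ ^ 2 / a) * u) * (2 * π * u) ^ (-(d : ℝ) / 2) *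
      exp (-1 / (2 * u))) * hpow
  rw [hsubst, ← mul_assoc, ← integral_const_mul]
  exact setIntegral_congr_fun measurableSet_Ioi hpointwise

theorem stmt4_general (d : ℕ) (σ : ℝ) (hσ : 0 < σ) :
    StrictAntiOn
      (fun ρ : ℝ => ρ ^ ((d : ℝ) - 2) *
        ((1 / σ ^ 2) * ∫ t in Set.Ioi (0 : ℝ),
          Real.exp (-t / σ ^ 2) * (2 * Real.pi * t) ^ (-(d : ℝ) / 2) *
            Real.exp (-ρ ^ 2 / (2 * t))))
      (Set.Ioi 0) := by
  have hprofile : ∀ ρ : ℝ, 0 < ρ →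
      ρ ^ ((d : ℝ) - 2) * ((1 / σ ^ 2) * ∫ t in Ioi (0 : ℝ),
        exp (-t / σ ^ 2) * (2 * π * t) ^ (-(d : ℝ) / 2) * exp (-ρ ^ 2 / (2 * t))) =
      1 / σ ^ 2 * resolventProfile d (ρ ^ 2 / σ ^ 2) := fun ρ hρ => by
    rw [mul_left_comm, rpow_mul_integral_eq_resolventProfile d _ hρ]
  intro ρ (hρ : 0 < ρ) ρ' (hρ' : 0 < ρ') hlt
  simp only [hprofile ρ hρ, hprofile ρ' hρ']
  have hscale : ρ ^ 2 / σ ^ 2 < ρ' ^ 2 / σ ^ 2 := by gcongr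
  have hmem : ∀ r : ℝ, 0 < r → r ^ 2 / σ ^ 2 ∈ Ioi 0 := fun r hr =>
    mem_Ioi.mpr (by positivity)
  exact mul_lt_mul_of_pos_left
    (resolventProfile_strictAntiOn d (hmem ρ hρ) (hmem ρ' hρ') hscale) (by positivity)

/-- The radial profile `ρ ↦ ρ^{d-2} G_{σ²}(ρ)` of the resolvent kernel is strictly
decreasing on `(0,∞)`. -/
theorem stmt4 (d : ℕ) (hd : 3 ≤ d) (σ : ℝ) (hσ : 0 < σ) :
    StrictAntiOn
      (fun ρ : ℝ => ρ ^ ((d : ℝ) - 2) *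
        ((1 / σ ^ 2) * ∫ t in Set.Ioi (0 : ℝ),
          Real.exp (-t / σ ^ 2) * (2 * Real.pi * t) ^ (-(d : ℝ) / 2) *
            Real.exp (-ρ ^ 2 / (2 * t))))
      (Set.Ioi 0) :=
  stmt4_general d σ hσ
end

section
/- Let (Ω, 𝔉, ℙ) be a probability space, (A, 𝔄) a measurable space, X : Ω → A measurable, and Y : Ω → ℝ integrable. Let f* : A → ℝ be a measurable function such that f*(X) is a version of the conditional expectation E[Y | σ(X)]. Let B ∈ 𝔄 and let C ∈ 𝔉 be an event with X⁻¹(B) ⊆ C and E[Y²·1_C] < ∞. If f̃ : A → ℝ is measurable and minimises f ↦ E[(f(X) − Y)²·1_C] over all measurable functions f : A → ℝ, then f̃·1_B = f*·1_B holds ℙ^X-almost surely, where ℙ^X denotes the law of X. -/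
/-!
A minimiser `f̃` of the loss restricted to `C` satisfies the first-order condition: perturbing
`f̃` by `t • 1_T` and expanding the square shows that
`t ↦ 2 t ∫_{C ∩ X⁻¹T} (f̃(X) - Y) + t² ℙ(C ∩ X⁻¹T)` is nonnegative, so the linear coefficient
vanishes. Taking `T ⊆ B`, where `X⁻¹T ⊆ C`, this says that `1_B f̃ (X)` has the same integrals as
`1_{X⁻¹B} Y` over every `σ(X)`-measurable set, hence it is `E[1_{X⁻¹B} Y | X] = 1_B f*(X)`, and
the equality descends to the law of `X`.
-/

open MeasureTheory ProbabilityTheory Set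

open scoped ENNReal

lemma eq_zero_of_forall_two_mul_mul_add_sq_mul_nonneg {a b : ℝ}
    (h : ∀ t : ℝ, 0 ≤ 2 * t * a + t ^ 2 * b) : a = 0 := by
  have hdiscrim := discrim_le_zero (a := b) (b := 2 * a) (c := 0) fun t => by linarith [h t]
  rw [discrim] at hdiscrim
  nlinarith [sq_nonneg a]

lemma indicator_comp_eq_indicator_preimage {α β M : Type*} [Zero M] (X : α → β) (B : Set β)
    (φ : β → M) : B.indicator φ ∘ X = (X ⁻¹' B).indicator (φ ∘ X) :=
  funext fun _ => (indicator_comp_right _).symm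

section

variable {Ω A : Type*} [MeasurableSpace Ω] [MeasurableSpace A] {μ : Measure Ω}

noncomputable def sqLoss (μ : Measure Ω) (X : Ω → A) (Y : Ω → ℝ) (f : A → ℝ) : ℝ≥0∞ :=
  ∫⁻ ω, ENNReal.ofReal ((f (X ω) - Y ω) ^ 2) ∂μ

lemma memLp_two_of_lintegral_sq_lt_top {f : Ω → ℝ} (hf : AEStronglyMeasurable f μ)
    (h : ∫⁻ ω, ENNReal.ofReal (f ω ^ 2) ∂μ < ⊤) : MemLp f 2 μ :=
  (memLp_two_iff_integrable_sq hf).2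
    ⟨hf.pow 2, (hasFiniteIntegral_iff_ofReal (ae_of_all _ fun _ => sq_nonneg _)).2 h⟩

lemma integral_sq_le_integral_sq_of_lintegral_le {f g : Ω → ℝ} (hf : AEStronglyMeasurable f μ)
    (hg : MemLp g 2 μ)
    (h : ∫⁻ ω, ENNReal.ofReal (f ω ^ 2) ∂μ ≤ ∫⁻ ω, ENNReal.ofReal (g ω ^ 2) ∂μ) :
    ∫ ω, f ω ^ 2 ∂μ ≤ ∫ ω, g ω ^ 2 ∂μ := by
  rw [integral_eq_lintegral_of_nonneg_ae (ae_of_all _ fun _ => sq_nonneg _) (hf.pow 2),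
    integral_eq_lintegral_of_nonneg_ae (ae_of_all _ fun _ => sq_nonneg _) (hg.1.pow 2)]
  exact ENNReal.toReal_mono hg.integrable_sq.lintegral_lt_top.ne h

lemma integral_mul_eq_zero_of_forall_integral_sq_le {D g : Ω → ℝ} (hD : MemLp D 2 μ)
    (hg : MemLp g 2 μ) (h : ∀ t : ℝ, ∫ ω, D ω ^ 2 ∂μ ≤ ∫ ω, (D ω + t * g ω) ^ 2 ∂μ) :
    ∫ ω, D ω * g ω ∂μ = 0 := by
  have hDg : Integrable (fun ω => D ω * g ω) μ := hD.integrable_mul hg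
  refine eq_zero_of_forall_two_mul_mul_add_sq_mul_nonneg (b := ∫ ω, g ω ^ 2 ∂μ) fun t => ?_
  have hexpand : ∫ ω, (D ω + t * g ω) ^ 2 ∂μ = ∫ ω, D ω ^ 2 ∂μ
      + 2 * t * ∫ ω, D ω * g ω ∂μ + t ^ 2 * ∫ ω, g ω ^ 2 ∂μ := by
    have hpoint : (fun ω => (D ω + t * g ω) ^ 2)
        = fun ω => D ω ^ 2 + 2 * t * (D ω * g ω) + t ^ 2 * g ω ^ 2 := by
      ext ω
      ring
    have hlinear : Integrable (fun ω => D ω ^ 2 + 2 * t * (D ω * g ω)) μ :=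
      hD.integrable_sq.add (hDg.const_mul _)
    rw [hpoint, integral_add hlinear (hg.integrable_sq.const_mul _),
      integral_add hD.integrable_sq (hDg.const_mul _), integral_const_mul, integral_const_mul]
  linarith [h t]

lemma setIntegral_preimage_sub_eq_zero_of_forall_sqLoss_le [IsFiniteMeasure μ] {X : Ω → A}
    {Y : Ω → ℝ} {f : A → ℝ} (hX : Measurable X) (hY : AEStronglyMeasurable Y μ)
    (hf : Measurable f) (hfin : sqLoss μ X Y f < ⊤)
    (hmin : ∀ g : A → ℝ, Measurable g → sqLoss μ X Y f ≤ sqLoss μ X Y g)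
    {T : Set A} (hT : MeasurableSet T) :
    ∫ ω in X ⁻¹' T, (f (X ω) - Y ω) ∂μ = 0 := by
  set D : Ω → ℝ := fun ω => f (X ω) - Y ω
  have hDm : AEStronglyMeasurable D μ := (hf.comp hX).aestronglyMeasurable.sub hY
  have hD : MemLp D 2 μ := memLp_two_of_lintegral_sq_lt_top hDm hfin
  set I : Ω → ℝ := (X ⁻¹' T).indicator 1
  have hI : MemLp I 2 μ := (memLp_const 1).indicator (hX hT)
  have hDI : (X ⁻¹' T).indicator D = fun ω => D ω * I ω := by
    ext ω
    by_cases hω : ω ∈ X ⁻¹' T <;> simp [I, hω]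
  rw [← integral_indicator (hX hT), hDI]
  refine integral_mul_eq_zero_of_forall_integral_sq_le hD hI fun t => ?_
  have hperturb : ∀ ω, f (X ω) + t * T.indicator 1 (X ω) - Y ω = D ω + t * I ω := by
    intro ω
    simp only [D, I, ← indicator_comp_right, Pi.one_comp]
    ring
  refine integral_sq_le_integral_sq_of_lintegral_le hDm (hD.add (hI.const_mul t)) ?_
  simpa only [sqLoss, hperturb] using
    hmin (fun x => f x + t * T.indicator 1 x) (hf.add ((measurable_const.indicator hT).const_mul t))

lemma comp_ae_eq_condExp_comap_of_forall_setIntegral_sub_eq_zero [IsFiniteMeasure μ]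
    {X : Ω → A} {Y : Ω → ℝ} {φ : A → ℝ} (hX : Measurable X) (hφ : Measurable φ)
    (hφX : Integrable (φ ∘ X) μ) (hY : Integrable Y μ)
    (h : ∀ T, MeasurableSet T → ∫ ω in X ⁻¹' T, (φ (X ω) - Y ω) ∂μ = 0) :
    φ ∘ X =ᵐ[μ] μ[Y | MeasurableSpace.comap X inferInstance] := by
  refine ae_eq_condExp_of_forall_setIntegral_eq hX.comap_le hY (fun _ _ _ => hφX.integrableOn)
    ?_ (hφ.comp (comap_measurable X)).aestronglyMeasurable
  rintro _ ⟨T, hT, rfl⟩ -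
  rw [← sub_eq_zero, ← integral_sub hφX.integrableOn hY.integrableOn]
  exact h T hT

lemma indicator_comp_ae_eq_condExp_of_forall_sqLoss_restrict_le [IsFiniteMeasure μ]
    {X : Ω → A} {Y : Ω → ℝ} {f : A → ℝ} {B : Set A} {C : Set Ω} (hX : Measurable X)
    (hY : Integrable Y μ) (hf : Measurable f) (hB : MeasurableSet B) (hBC : X ⁻¹' B ⊆ C)
    (hfin : sqLoss (μ.restrict C) X Y f < ⊤)
    (hmin : ∀ g : A → ℝ, Measurable g → sqLoss (μ.restrict C) X Y f ≤ sqLoss (μ.restrict C) X Y g) :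
    B.indicator f ∘ X =ᵐ[μ] μ[(X ⁻¹' B).indicator Y | MeasurableSpace.comap X inferInstance] := by
  have hE : MeasurableSet (X ⁻¹' B) := hX hB
  have hresidual : IntegrableOn (fun ω => f (X ω) - Y ω) (X ⁻¹' B) μ :=
    IntegrableOn.mono_set ((memLp_two_of_lintegral_sq_lt_top
      ((hf.comp hX).aestronglyMeasurable.sub hY.1.restrict) hfin).integrable one_le_two) hBC
  refine comp_ae_eq_condExp_comap_of_forall_setIntegral_sub_eq_zero hX
    (hf.indicator hB) ?_ (hY.indicator hE) fun T hT => ?_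
  · rw [indicator_comp_eq_indicator_preimage, integrable_indicator_iff hE]
    exact (hresidual.add hY.integrableOn).congr_fun (fun ω _ => sub_add_cancel _ _) hE
  · have horth := setIntegral_preimage_sub_eq_zero_of_forall_sqLoss_le hX hY.1.restrict
      hf hfin hmin (hT.inter hB)
    rw [Measure.restrict_restrict (hX (hT.inter hB)),
      inter_eq_left.2 ((preimage_mono inter_subset_right).trans hBC)] at horth
    have hintegrand : ∀ ω, B.indicator f (X ω) - (X ⁻¹' B).indicator Y ω
        = (X ⁻¹' B).indicator (fun ω => f (X ω) - Y ω) ω := by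
      intro ω
      by_cases hω : X ω ∈ B <;> simp [hω]
    simp_rw [hintegrand]
    rwa [setIntegral_indicator hE, ← preimage_inter]

lemma ae_eq_map_of_comp_ae_eq {β : Type*} [MeasurableSpace β] [MeasurableEq β] {X : Ω → A}
    {f g : A → β} (hX : AEMeasurable X μ) (hf : Measurable f) (hg : Measurable g)
    (h : f ∘ X =ᵐ[μ] g ∘ X) : f =ᵐ[μ.map X] g :=
  (ae_map_iff hX (measurableSet_eq_fun hf hg)).2 h

end

theorem stmt11_general {Ω : Type*} [MeasureSpace Ω] [IsProbabilityMeasure (ℙ : Measure Ω)]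
    {A : Type*} [MeasurableSpace A]
    (X : Ω → A) (hX : Measurable X)
    (Y : Ω → ℝ) (hY : Integrable Y ℙ)
    (fstar : A → ℝ) (hfstarMeas : Measurable fstar)
    (hfstar : (fun ω => fstar (X ω)) =ᵐ[(ℙ : Measure Ω)]
      MeasureTheory.condExp (MeasurableSpace.comap X inferInstance) ℙ Y)
    (B : Set A) (hB : MeasurableSet B)
    (C : Set Ω)
    (hBC : X ⁻¹' B ⊆ C)
    (hYsq : ∫⁻ ω in C, ENNReal.ofReal ((Y ω) ^ 2) ∂ℙ < ⊤)
    (ftilde : A → ℝ) (hftilde : Measurable ftilde)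
    (hmin : ∀ g : A → ℝ, Measurable g →
      ∫⁻ ω in C, ENNReal.ofReal ((ftilde (X ω) - Y ω) ^ 2) ∂ℙ ≤
        ∫⁻ ω in C, ENNReal.ofReal ((g (X ω) - Y ω) ^ 2) ∂ℙ) :
    ∀ᵐ x ∂(Measure.map X (ℙ : Measure Ω)), x ∈ B → ftilde x = fstar x := by
  have hfin : sqLoss ((ℙ : Measure Ω).restrict C) X Y ftilde < ⊤ :=
    (hmin 0 measurable_const).trans_lt (by simpa [sqLoss] using hYsq)
  have hcomp : B.indicator ftilde ∘ X =ᵐ[ℙ] B.indicator fstar ∘ X := by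
    rw [indicator_comp_eq_indicator_preimage X B fstar]
    exact (indicator_comp_ae_eq_condExp_of_forall_sqLoss_restrict_le hX hY hftilde hB hBC hfin
      hmin).trans ((condExp_indicator hY (comap_measurable X hB)).trans hfstar.symm.indicator)
  filter_upwards [ae_eq_map_of_comp_ae_eq hX.aemeasurable (hftilde.indicator hB)
    (hfstarMeas.indicator hB) hcomp] with x hx hxB
  simpa [indicator_of_mem hxB] using hx

/-- Lemma A.1: conditional expectation as a restricted `L²` projection. Any measurable
minimiser of the squared-error loss restricted to an event `C ⊇ X⁻¹(B)` agrees with the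
conditional-expectation factorisation `f*` on `B`, almost surely with respect to the law
of `X`. -/
theorem stmt11 {Ω : Type*} [MeasureSpace Ω] [IsProbabilityMeasure (ℙ : Measure Ω)]
    {A : Type*} [MeasurableSpace A]
    (X : Ω → A) (hX : Measurable X)
    (Y : Ω → ℝ) (hY : Integrable Y ℙ)
    (fstar : A → ℝ) (hfstarMeas : Measurable fstar)
    (hfstar : (fun ω => fstar (X ω)) =ᵐ[(ℙ : Measure Ω)]
      MeasureTheory.condExp (MeasurableSpace.comap X inferInstance) ℙ Y)
    (B : Set A) (hB : MeasurableSet B)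
    (C : Set Ω) (hC : MeasurableSet C)
    (hBC : X ⁻¹' B ⊆ C)
    (hYsq : ∫⁻ ω in C, ENNReal.ofReal ((Y ω) ^ 2) ∂ℙ < ⊤)
    (ftilde : A → ℝ) (hftilde : Measurable ftilde)
    (hmin : ∀ g : A → ℝ, Measurable g →
      ∫⁻ ω in C, ENNReal.ofReal ((ftilde (X ω) - Y ω) ^ 2) ∂ℙ ≤
        ∫⁻ ω in C, ENNReal.ofReal ((g (X ω) - Y ω) ^ 2) ∂ℙ) :
    ∀ᵐ x ∂(Measure.map X (ℙ : Measure Ω)), x ∈ B → ftilde x = fstar x :=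
  stmt11_general X hX Y hY fstar hfstarMeas hfstar B hB C hBC hYsq ftilde hftilde hmin
end
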